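/- arXiv:1902.10237 — 2 statements merged into one kernel-verified Lean document; each statement's English description precedes it below -/
import Mathlib

section
/- Let d, L ≥ 1, s ≥ 1, let c : (ℤ^L)^s → (ℚ^d)^L be a polynomial map (each coordinate is given by a polynomial with rational coefficients), and let V be a subgroup of ℤ^d of the form V = W ∩ ℤ^d for some ℚ-linear subspace W ⊆ ℚ^d. Then the set {(h_1,…,h_s) ∈ (ℤ^L)^s : G(c(h_1,…,h_s)) ⊆ V} is either equal to all of (ℤ^L)^s or has upper Banach density 0. -/
open MeasureTheory Filter Finset Topology
open scoped symmDiff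

/-- A Følner sequence in an additive abelian group. -/
def Folner {G : Type*} [AddCommGroup G] [DecidableEq G] (I : ℕ → Finset G) : Prop :=
  (∀ N, (I N).Nonempty) ∧
    ∀ g : G,
      Tendsto (fun N => ((((I N).image (fun x => g + x)) ∆ (I N)).card : ℝ) / (I N).card)
        atTop (𝓝 0)

/-- A set `E` in an additive abelian group has upper Banach density `0` if along every
Følner sequence `(I N)`, `|E ∩ I N| / |I N| → 0`. -/
def UpperBanachDensityZero {G : Type*} [AddCommGroup G] [DecidableEq G] (E : Set G) : Prop :=
  ∀ I : ℕ → Finset G, Folner I →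
    Tendsto (fun N => ((E ∩ (I N : Set G)).ncard : ℝ) / (I N).card) atTop (𝓝 0)

lemma exists_int_mul {ι : Type*} [Fintype ι] (q : ι → ℚ) :
    ∃ n : ℕ, 0 < n ∧ ∃ g : ι → ℤ, ∀ i, (g i : ℚ) = (n : ℚ) * q i := by
  classical
  refine ⟨∏ i, (q i).den, Finset.prod_pos fun i _ => (q i).pos, fun i =>
    (((∏ j, (q j).den) / (q i).den : ℕ) : ℤ) * (q i).num, fun i => ?_⟩
  have hdvd : (q i).den ∣ ∏ j, (q j).den := Finset.dvd_prod_of_mem _ (Finset.mem_univ i)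
  obtain ⟨m, hm⟩ := hdvd
  have hden : ((q i).den : ℚ) ≠ 0 := by exact_mod_cast (q i).den_ne_zero
  have h1 : ((q i).den : ℚ) * q i = (q i).num := by
    rw [mul_comm]
    exact_mod_cast Rat.mul_den_eq_num (q i)
  have h2 : (∏ j, (q j).den) / (q i).den = m := by
    rw [hm, Nat.mul_div_cancel_left _ (q i).pos]
  beta_reduce
  rw [h2, hm]
  push_cast
  rw [mul_comm ((q i).den : ℚ) (m : ℚ), mul_assoc, h1]

lemma coeff_prod_natDegree_le' {ι : Type*} (s : Finset ι) (f : ι → Polynomial ℚ) (n : ι → ℕ)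
    (h : ∀ i ∈ s, (f i).natDegree ≤ n i) :
    (∏ i ∈ s, f i).coeff (∑ i ∈ s, n i) = ∏ i ∈ s, (f i).coeff (n i) := by
  classical
  induction s using Finset.cons_induction with
  | empty => simp
  | cons a s ha ih =>
      rw [Finset.prod_cons, Finset.sum_cons, Finset.prod_cons,
        Polynomial.coeff_mul_add_eq_of_natDegree_le (h a (Finset.mem_cons_self a s))
          ((Polynomial.natDegree_prod_le s f).trans (Finset.sum_le_sum fun i hi =>
            h i (Finset.mem_cons_of_mem hi))),
        ih fun i hi => h i (Finset.mem_cons_of_mem hi)]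

lemma eval_mul_of_isHomogeneous {σ : Type*} {H : MvPolynomial σ ℚ} {D : ℕ}
    (h : H.IsHomogeneous D) (r : ℚ) (x : σ → ℚ) :
    MvPolynomial.eval (fun i => r * x i) H = r ^ D * MvPolynomial.eval x H := by
  classical
  conv_lhs => rw [← MvPolynomial.support_sum_monomial_coeff H]
  conv_rhs => rw [← MvPolynomial.support_sum_monomial_coeff H]
  rw [map_sum, map_sum, Finset.mul_sum]
  refine Finset.sum_congr rfl fun m hm => ?_
  rw [MvPolynomial.eval_monomial, MvPolynomial.eval_monomial]
  have hd : ∑ i ∈ m.support, m i = D := by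
    have := h (MvPolynomial.mem_support_iff.mp hm)
    simpa [Finsupp.weight_apply, Finsupp.sum] using this
  rw [Finsupp.prod, Finsupp.prod]
  simp_rw [mul_pow]
  rw [Finset.prod_mul_distrib, Finset.prod_pow_eq_pow_sum, hd]
  ring

open scoped Classical in
lemma exists_direction {σ : Type*} [Fintype σ] (Q : MvPolynomial σ ℚ) (hQ : Q ≠ 0) :
    ∃ v : σ → ℤ, ∀ (x : σ → ℤ) (k : ℕ),
      ((Finset.range k).filter
        (fun j : ℕ => MvPolynomial.eval (fun i => (x i : ℚ) + (j : ℚ) * (v i : ℚ)) Q = 0)).card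
        ≤ Q.totalDegree := by
  classical
  set D := Q.totalDegree with hD
  set H := MvPolynomial.homogeneousComponent D Q with hH
  have hsupp : Q.support.Nonempty := MvPolynomial.support_nonempty.mpr hQ
  obtain ⟨m0, hm0, hm0d⟩ := Finset.exists_mem_eq_sup Q.support hsupp
    (fun m : σ →₀ ℕ => m.sum fun _ e => e)
  have hm0deg : m0.degree = D := by
    rw [hD, MvPolynomial.totalDegree, hm0d]; rfl
  have hHne : H ≠ 0 := by
    intro h0
    have hcH := MvPolynomial.coeff_homogeneousComponent (n := D) (φ := Q) m0
    rw [← hH, h0] at hcH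
    simp only [MvPolynomial.coeff_zero, hm0deg, if_true] at hcH
    exact MvPolynomial.mem_support_iff.mp hm0 hcH.symm
  have hq : ∃ q : σ → ℚ, MvPolynomial.eval q H ≠ 0 := by
    by_contra hcon
    push_neg at hcon
    exact hHne (MvPolynomial.funext fun xq => by rw [hcon xq, map_zero])
  obtain ⟨q, hq⟩ := hq
  obtain ⟨n, hn, v, hv⟩ := exists_int_mul q
  have hvH : MvPolynomial.eval (fun i => (v i : ℚ)) H ≠ 0 := by
    have hfe : (fun i => (v i : ℚ)) = fun i => (n : ℚ) * q i := funext hv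
    rw [hfe, eval_mul_of_isHomogeneous (MvPolynomial.homogeneousComponent_isHomogeneous D Q)]
    exact mul_ne_zero (pow_ne_zero _ (by exact_mod_cast hn.ne')) hq
  refine ⟨v, fun x k => ?_⟩
  set g : σ → Polynomial ℚ :=
    fun i => Polynomial.C (x i : ℚ) + Polynomial.C (v i : ℚ) * Polynomial.X with hg
  set Px : Polynomial ℚ := MvPolynomial.eval₂ Polynomial.C g Q with hPx
  have hgdeg : ∀ i, (g i).natDegree ≤ 1 := fun i => by
    refine (Polynomial.natDegree_add_le _ _).trans ?_
    simp only [Polynomial.natDegree_C, max_le_iff]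
    exact ⟨Nat.zero_le _, (Polynomial.natDegree_C_mul_le _ _).trans (by simp)⟩
  have hgcoeff : ∀ i, (g i).coeff 1 = (v i : ℚ) := fun i => by
    rw [hg]
    simp only [Polynomial.coeff_add, Polynomial.coeff_C_mul, Polynomial.coeff_X_one,
      Polynomial.coeff_C, mul_one]
    norm_num
  -- Px as a sum over the support of Q
  set T : (σ →₀ ℕ) → Polynomial ℚ := fun m =>
    Polynomial.C (MvPolynomial.coeff m Q) * ∏ i ∈ m.support, (g i) ^ (m i) with hT
  have hPxsum : Px = ∑ m ∈ Q.support, T m := by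
    rw [hPx]
    conv_lhs => rw [← MvPolynomial.support_sum_monomial_coeff Q]
    rw [MvPolynomial.eval₂_sum]
    refine Finset.sum_congr rfl fun m hm => ?_
    rw [MvPolynomial.eval₂_monomial]
    rfl
  have hTdeg : ∀ m : σ →₀ ℕ, (T m).natDegree ≤ m.degree := by
    intro m
    refine (Polynomial.natDegree_C_mul_le _ _).trans ?_
    refine (Polynomial.natDegree_prod_le _ _).trans ?_
    refine le_trans (Finset.sum_le_sum fun i _ => ?_) (le_of_eq rfl)
    exact Polynomial.natDegree_pow_le.trans (by
      calc m i * (g i).natDegree ≤ m i * 1 := Nat.mul_le_mul_left _ (hgdeg i)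
      _ = m i := Nat.mul_one _)
  have hsupD : ∀ m ∈ Q.support, m.degree ≤ D := by
    intro m hm
    rw [hD]
    exact MvPolynomial.le_totalDegree hm
  have hTcoeff : ∀ m ∈ Q.support, (T m).coeff D =
      (if m.degree = D then
        MvPolynomial.coeff m Q * ∏ i ∈ m.support, ((v i : ℚ)) ^ (m i) else 0) := by
    intro m hm
    by_cases hmd : m.degree = D
    · rw [if_pos hmd, hT]
      simp only []
      rw [Polynomial.coeff_C_mul]
      congr 1
      have hdeq : D = ∑ i ∈ m.support, m i := by rw [← hmd]; rfl
      rw [hdeq, coeff_prod_natDegree_le' m.support (fun i => (g i) ^ (m i)) (fun i => m i)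
        (fun i _ => Polynomial.natDegree_pow_le.trans (by
          calc m i * (g i).natDegree ≤ m i * 1 := Nat.mul_le_mul_left _ (hgdeg i)
          _ = m i := Nat.mul_one _))]
      refine Finset.prod_congr rfl fun i _ => ?_
      have := Polynomial.coeff_pow_of_natDegree_le (p := g i) (n := 1) (m := m i) (hgdeg i)
      rw [Nat.mul_one] at this
      rw [this, hgcoeff]
    · rw [if_neg hmd]
      refine Polynomial.coeff_eq_zero_of_natDegree_lt ?_
      exact lt_of_le_of_lt (hTdeg m) (lt_of_le_of_ne (hsupD m hm) hmd)
  have hcoeff : Px.coeff D = MvPolynomial.eval (fun i => (v i : ℚ)) H := by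
    rw [hPxsum, Polynomial.finset_sum_coeff, Finset.sum_congr rfl hTcoeff, Finset.sum_ite,
      Finset.sum_const_zero, add_zero]
    rw [hH, MvPolynomial.homogeneousComponent_apply, map_sum]
    refine Finset.sum_congr rfl fun m hm => ?_
    rw [MvPolynomial.eval_monomial]
    rfl
  have hPxne : Px ≠ 0 := fun h0 => hvH (by rw [← hcoeff, h0, Polynomial.coeff_zero])
  have hPxdeg : Px.natDegree ≤ D := by
    rw [hPxsum]
    refine Polynomial.natDegree_sum_le_of_forall_le _ _ fun m hm => ?_
    exact (hTdeg m).trans (hsupD m hm)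
  have hPeval : ∀ t : ℚ,
      Polynomial.eval t Px = MvPolynomial.eval (fun i => (x i : ℚ) + t * (v i : ℚ)) Q := by
    intro t
    have hcl := MvPolynomial.eval₂_comp_left (Polynomial.evalRingHom t) Polynomial.C g Q
    rw [hPx]
    change (Polynomial.evalRingHom t) (MvPolynomial.eval₂ Polynomial.C g Q) = _
    rw [hcl]
    have hcomp : (Polynomial.evalRingHom t).comp Polynomial.C = RingHom.id ℚ := by
      ext a; simp
    have hgt : (Polynomial.evalRingHom t) ∘ g = fun i => (x i : ℚ) + t * (v i : ℚ) := by
      funext i; simp [hg]; ring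
    rw [hcomp, hgt]
    rfl
  -- count roots
  have hcard := Finset.card_le_card_of_injOn (s := (Finset.range k).filter
      (fun j : ℕ => MvPolynomial.eval (fun i => (x i : ℚ) + (j : ℚ) * (v i : ℚ)) Q = 0))
      (t := Px.roots.toFinset) (fun j => (j : ℚ))
      (fun j hj => by
        rw [Finset.mem_coe, Finset.mem_filter] at hj
        rw [Finset.mem_coe, Multiset.mem_toFinset, Polynomial.mem_roots hPxne]
        rw [Polynomial.IsRoot, hPeval]
        exact hj.2)
      (fun a _ b _ hab => Nat.cast_injective hab)
  exact hcard.trans (le_trans (Multiset.toFinset_card_le _)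
    (le_trans (Polynomial.card_roots' Px) hPxdeg))

open scoped Classical in
lemma densityZero_of_lines {G : Type*} [AddCommGroup G] [DecidableEq G]
    (E : Set G) (v : G) (D : ℕ)
    (hE : ∀ (x : G) (k : ℕ), ((Finset.range k).filter (fun j => x + j • v ∈ E)).card ≤ D) :
    UpperBanachDensityZero E := by
  classical
  intro I hI
  have hpos : ∀ N, (0 : ℝ) < (I N).card := fun N => by
    exact_mod_cast Finset.card_pos.mpr (hI.1 N)
  -- the basic counting inequality, for every k and N
  have key : ∀ (k N : ℕ),
      (k : ℝ) * ((E ∩ (I N : Set G)).ncard : ℝ) ≤ (D : ℝ) * (I N).card +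
        ∑ j ∈ Finset.range k,
          ((((I N).image (fun x => (-(j • v)) + x)) ∆ (I N)).card : ℝ) := by
    intro k N
    set In := I N with hIn
    set F : Finset G := In.filter (· ∈ E) with hF
    have hncard : (E ∩ (In : Set G)).ncard = F.card := by
      rw [hF]
      rw [← Set.ncard_coe_finset]
      congr 1
      ext y
      simp [Set.mem_inter_iff, and_comm]
    set A : ℕ → Finset G := fun j => In.filter (fun x => x + j • v ∈ E) with hA
    have claim1 : ∑ j ∈ Finset.range k, (A j).card ≤ D * In.card := by
      have hswap : ∑ j ∈ Finset.range k, (A j).card =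
          ∑ x ∈ In, ((Finset.range k).filter (fun j => x + j • v ∈ E)).card := by
        simp_rw [hA, Finset.card_filter]
        rw [Finset.sum_comm]
      rw [hswap]
      calc ∑ x ∈ In, ((Finset.range k).filter (fun j => x + j • v ∈ E)).card
          ≤ ∑ _x ∈ In, D := Finset.sum_le_sum fun x _ => hE x k
        _ = D * In.card := by rw [Finset.sum_const, smul_eq_mul, mul_comm]
    have claim2 : ∀ j, F.card ≤ (A j).card +
        (((In.image (fun x => (-(j • v)) + x)) ∆ In).card) := by
      intro j
      have hinj : Function.Injective (fun x : G => (-(j • v)) + x) :=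
        fun a b hab => by simpa using hab
      have himg : F.image (fun x => (-(j • v)) + x) ⊆
          A j ∪ ((In.image (fun x => (-(j • v)) + x)) \ In) := by
        intro y hy
        rw [Finset.mem_image] at hy
        obtain ⟨z, hzF, rfl⟩ := hy
        rw [hF, Finset.mem_filter] at hzF
        by_cases hyI : (-(j • v)) + z ∈ In
        · refine Finset.mem_union_left _ ?_
          rw [hA, Finset.mem_filter]
          refine ⟨hyI, ?_⟩
          have : (-(j • v)) + z + j • v = z := by abel
          rw [this]
          exact hzF.2
        · refine Finset.mem_union_right _ ?_
          rw [Finset.mem_sdiff]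
          exact ⟨Finset.mem_image_of_mem _ hzF.1, hyI⟩
      calc F.card = (F.image (fun x => (-(j • v)) + x)).card :=
            (Finset.card_image_of_injective _ hinj).symm
        _ ≤ (A j ∪ ((In.image (fun x => (-(j • v)) + x)) \ In)).card :=
            Finset.card_le_card himg
        _ ≤ (A j).card + ((In.image (fun x => (-(j • v)) + x)) \ In).card :=
            Finset.card_union_le _ _
        _ ≤ (A j).card + (((In.image (fun x => (-(j • v)) + x)) ∆ In).card) :=
            Nat.add_le_add_left (Finset.card_le_card (by
              intro y hy
              rw [Finset.mem_symmDiff]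
              rw [Finset.mem_sdiff] at hy
              exact Or.inl ⟨hy.1, hy.2⟩)) _
    have hnat : k * F.card ≤ D * In.card +
        ∑ j ∈ Finset.range k, (((In.image (fun x => (-(j • v)) + x)) ∆ In).card) := by
      calc k * F.card = ∑ _j ∈ Finset.range k, F.card := by
            rw [Finset.sum_const, Finset.card_range, smul_eq_mul]
        _ ≤ ∑ j ∈ Finset.range k, ((A j).card +
            (((In.image (fun x => (-(j • v)) + x)) ∆ In).card)) :=
            Finset.sum_le_sum fun j _ => claim2 j
        _ = ∑ j ∈ Finset.range k, (A j).card +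
            ∑ j ∈ Finset.range k, (((In.image (fun x => (-(j • v)) + x)) ∆ In).card) :=
            Finset.sum_add_distrib
        _ ≤ D * In.card +
            ∑ j ∈ Finset.range k, (((In.image (fun x => (-(j • v)) + x)) ∆ In).card) :=
            Nat.add_le_add_right claim1 _
    rw [hncard]
    exact_mod_cast hnat
  -- now the limit argument
  rw [Metric.tendsto_atTop]
  intro ε hε
  obtain ⟨k, hk⟩ := exists_nat_gt (2 * D / ε)
  have hk0 : 0 < k := by
    by_contra hk0
    push_neg at hk0
    interval_cases k
    · simp at hk
      have : (0:ℝ) ≤ 2 * D / ε := by positivity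
      linarith
  have hkR : (0:ℝ) < k := by exact_mod_cast hk0
  have hDk : (D : ℝ) / k < ε / 2 := by
    rw [div_lt_iff₀ hkR]
    rw [div_lt_iff₀ hε] at hk
    nlinarith
  -- eventually each error term is small
  have hev : ∀ᶠ N in atTop, ∀ j ∈ Finset.range k,
      ((((I N).image (fun x => (-(j • v)) + x)) ∆ (I N)).card : ℝ) / (I N).card < ε / 2 := by
    rw [Filter.eventually_all_finset]
    intro j _
    have := (hI.2 (-(j • v)))
    rw [Metric.tendsto_atTop] at this
    obtain ⟨N0, hN0⟩ := this (ε / 2) (by linarith)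
    rw [Filter.eventually_atTop]
    refine ⟨N0, fun N hN => ?_⟩
    have := hN0 N hN
    rw [Real.dist_eq, sub_zero] at this
    calc ((((I N).image (fun x => (-(j • v)) + x)) ∆ (I N)).card : ℝ) / (I N).card
        ≤ |((((I N).image (fun x => (-(j • v)) + x)) ∆ (I N)).card : ℝ) / (I N).card| :=
          le_abs_self _
      _ < ε / 2 := this
  obtain ⟨N0, hN0⟩ := Filter.eventually_atTop.mp hev
  refine ⟨N0, fun N hN => ?_⟩
  have herr := hN0 N hN
  have hkey := key k N
  set cN : ℝ := ((I N).card : ℝ) with hcN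
  set eN : ℝ := ((E ∩ ((I N) : Set G)).ncard : ℝ) with heN
  have heNnn : 0 ≤ eN := by positivity
  have hquot : eN / cN ≤ (D : ℝ) / k + (∑ j ∈ Finset.range k,
      ((((I N).image (fun x => (-(j • v)) + x)) ∆ (I N)).card : ℝ) / cN) / k := by
    have hsum : ∑ j ∈ Finset.range k,
        ((((I N).image (fun x => (-(j • v)) + x)) ∆ (I N)).card : ℝ) / cN =
        (∑ j ∈ Finset.range k,
        ((((I N).image (fun x => (-(j • v)) + x)) ∆ (I N)).card : ℝ)) / cN :=
      (Finset.sum_div _ _ _).symm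
    rw [hsum]
    set S : ℝ := ∑ j ∈ Finset.range k,
        ((((I N).image (fun x => (-(j • v)) + x)) ∆ (I N)).card : ℝ) with hS
    have h1 : eN / cN ≤ ((D : ℝ) * cN + S) / (k * cN) := by
      rw [div_le_div_iff₀ (hpos N) (mul_pos hkR (hpos N))]
      calc eN * (k * cN) = (k * eN) * cN := by ring
        _ ≤ ((D : ℝ) * cN + S) * cN := mul_le_mul_of_nonneg_right hkey (le_of_lt (hpos N))
    refine h1.trans (le_of_eq ?_)
    have hcN0 : cN ≠ 0 := ne_of_gt (hpos N)
    have hk0' : (k : ℝ) ≠ 0 := ne_of_gt hkR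
    field_simp
  have hsum2 : (∑ j ∈ Finset.range k,
      ((((I N).image (fun x => (-(j • v)) + x)) ∆ (I N)).card : ℝ) / cN) ≤ k * (ε / 2) := by
    calc (∑ j ∈ Finset.range k,
        ((((I N).image (fun x => (-(j • v)) + x)) ∆ (I N)).card : ℝ) / cN)
        ≤ ∑ _j ∈ Finset.range k, (ε / 2) :=
          Finset.sum_le_sum fun j hj => le_of_lt (herr j hj)
      _ = k * (ε / 2) := by rw [Finset.sum_const, Finset.card_range, nsmul_eq_mul]
  rw [Real.dist_eq, sub_zero, abs_of_nonneg (by positivity)]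
  calc eN / cN ≤ (D : ℝ) / k + (∑ j ∈ Finset.range k,
      ((((I N).image (fun x => (-(j • v)) + x)) ∆ (I N)).card : ℝ) / cN) / k := hquot
    _ ≤ (D : ℝ) / k + (k * (ε / 2)) / k := by gcongr
    _ = (D : ℝ) / k + ε / 2 := by rw [mul_div_cancel_left₀ _ (ne_of_gt hkR)]
    _ < ε / 2 + ε / 2 := by linarith
    _ = ε := by ring

lemma exists_functionals (d : ℕ) (W : Submodule ℚ (Fin d → ℚ)) :
    ∃ (ι : Type) (φ : ι → ((Fin d → ℚ) →ₗ[ℚ] ℚ)),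
      ∀ v, v ∈ W ↔ ∀ i, φ i v = 0 := by
  classical
  refine ⟨Module.Free.ChooseBasisIndex ℚ ((Fin d → ℚ) ⧸ W),
    fun i => ((Module.Free.chooseBasis ℚ ((Fin d → ℚ) ⧸ W)).coord i).comp W.mkQ, fun v => ?_⟩
  constructor
  · intro hv i
    have : W.mkQ v = 0 := by
      rw [Submodule.mkQ_apply, Submodule.Quotient.mk_eq_zero]
      exact hv
    simp [LinearMap.comp_apply, this]
  · intro hv
    have : W.mkQ v = 0 :=
      (Module.Free.chooseBasis ℚ ((Fin d → ℚ) ⧸ W)).forall_coord_eq_zero_iff.mp hv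
    rwa [Submodule.mkQ_apply, Submodule.Quotient.mk_eq_zero] at this


/-- Let `c : (ℤ^L)^s → (ℚ^d)^L` be a polynomial map and let
`V = W ∩ ℤ^d` for a `ℚ`-linear subspace `W ⊆ ℚ^d`.  Then the set of
`(h_1, …, h_s)` with `G(c (h_1, …, h_s)) ⊆ V` — where
`G(b) = span_ℚ{b_1,…,b_L} ∩ ℤ^d` — is either all of `(ℤ^L)^s` or has upper Banach
density `0`. -/
theorem statement9
    (d L s : ℕ) (hd : 1 ≤ d) (hL : 1 ≤ L) (hs : 1 ≤ s)
    (c : (Fin s → (Fin L → ℤ)) → (Fin L → (Fin d → ℚ)))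
    (hc : ∃ P : Fin L → Fin d → MvPolynomial (Fin s × Fin L) ℚ,
      ∀ (h : Fin s → (Fin L → ℤ)) (r : Fin L) (j : Fin d),
        c h r j = MvPolynomial.eval (fun uv : Fin s × Fin L => ((h uv.1 uv.2 : ℚ))) (P r j))
    (W : Submodule ℚ (Fin d → ℚ)) :
    (let E : Set (Fin s → (Fin L → ℤ)) :=
      {h | ∀ g : Fin d → ℤ,
        (fun j => (g j : ℚ)) ∈ Submodule.span ℚ (Set.range (c h)) →
        (fun j => (g j : ℚ)) ∈ W}
    E = Set.univ ∨ UpperBanachDensityZero E) := by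
  classical
  intro E
  obtain ⟨P, hP⟩ := hc
  obtain ⟨ι, φ, hφ⟩ := exists_functionals d W
  have hEmem : ∀ h, h ∈ E ↔ ∀ g : Fin d → ℤ,
      (fun j => (g j : ℚ)) ∈ Submodule.span ℚ (Set.range (c h)) →
      (fun j => (g j : ℚ)) ∈ W := fun h => Iff.rfl
  -- characterization of E via membership of each c h r in W
  have hE2 : ∀ h, h ∈ E ↔ ∀ r, c h r ∈ W := by
    intro h
    rw [hEmem]
    constructor
    · intro hh r
      obtain ⟨n, hn, g, hg⟩ := exists_int_mul (c h r)
      have hgfun : (fun j => (g j : ℚ)) = (n : ℚ) • (c h r) := by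
        funext j
        rw [hg]
        simp
      have hspan : (fun j => (g j : ℚ)) ∈ Submodule.span ℚ (Set.range (c h)) := by
        rw [hgfun]
        exact Submodule.smul_mem _ _ (Submodule.subset_span ⟨r, rfl⟩)
      have hW := hh g hspan
      rw [hgfun] at hW
      have hn0 : ((n : ℚ)) ≠ 0 := by exact_mod_cast hn.ne'
      have := Submodule.smul_mem W ((n : ℚ)⁻¹) hW
      rwa [smul_smul, inv_mul_cancel₀ hn0, one_smul] at this
    · intro hh g hg
      refine Submodule.span_le.mpr ?_ hg
      rintro _ ⟨r, rfl⟩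
      exact hh r
  -- the polynomials cutting out E
  set Rp : Fin L → ι → MvPolynomial (Fin s × Fin L) ℚ := fun r i =>
    ∑ j, MvPolynomial.C (φ i (Pi.single j 1)) * P r j with hRp
  have hReval : ∀ (h : Fin s → Fin L → ℤ) (r : Fin L) (i : ι),
      MvPolynomial.eval (fun uv : Fin s × Fin L => ((h uv.1 uv.2 : ℚ))) (Rp r i)
        = φ i (c h r) := by
    intro h r i
    rw [hRp]
    simp only [map_sum, map_mul, MvPolynomial.eval_C]
    have hcr : c h r = ∑ j, (c h r j) • (Pi.single j 1 : Fin d → ℚ) := by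
      have := pi_eq_sum_univ (c h r)
      convert this using 2 with j
      funext k
      simp [Pi.single_apply, eq_comm]
    calc ∑ j, φ i (Pi.single j 1) *
          MvPolynomial.eval (fun uv : Fin s × Fin L => ((h uv.1 uv.2 : ℚ))) (P r j)
        = ∑ j, φ i (Pi.single j 1) * c h r j := by
          refine Finset.sum_congr rfl fun j _ => ?_
          rw [← hP h r j]
      _ = φ i (c h r) := by
          conv_rhs => rw [hcr]
          rw [map_sum]
          refine Finset.sum_congr rfl fun j _ => ?_
          rw [_root_.map_smul, smul_eq_mul, mul_comm]
  have hE3 : ∀ h, h ∈ E ↔ ∀ (r : Fin L) (i : ι),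
      MvPolynomial.eval (fun uv : Fin s × Fin L => ((h uv.1 uv.2 : ℚ))) (Rp r i) = 0 := by
    intro h
    rw [hE2]
    constructor
    · intro hh r i
      rw [hReval]
      exact (hφ _).mp (hh r) i
    · intro hh r
      refine (hφ _).mpr fun i => ?_
      rw [← hReval]
      exact hh r i
  by_cases hall : ∀ (h : Fin s → Fin L → ℤ) (r : Fin L) (i : ι),
      MvPolynomial.eval (fun uv : Fin s × Fin L => ((h uv.1 uv.2 : ℚ))) (Rp r i) = 0
  · left
    ext h
    simp only [Set.mem_univ, iff_true]
    exact (hE3 h).mpr (hall h)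
  · right
    push_neg at hall
    obtain ⟨h₀, r, i, hne⟩ := hall
    have hQ0 : Rp r i ≠ 0 := by
      intro h0
      rw [h0, map_zero] at hne
      exact hne rfl
    obtain ⟨vσ, hv⟩ := exists_direction (Rp r i) hQ0
    set v : Fin s → Fin L → ℤ := fun a b => vσ (a, b) with hvdef
    refine densityZero_of_lines E v (Rp r i).totalDegree ?_
    intro x k
    refine le_trans (Finset.card_le_card ?_) (hv (fun uv => x uv.1 uv.2) k)
    intro j hj
    rw [Finset.mem_filter] at hj ⊢
    refine ⟨hj.1, ?_⟩
    have hmem := (hE3 _).mp hj.2 r i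
    have hfun : (fun uv : Fin s × Fin L => (((x + j • v) uv.1 uv.2 : ℤ) : ℚ))
        = fun uv : Fin s × Fin L => ((x uv.1 uv.2 : ℚ) + (j : ℚ) * (vσ uv : ℚ)) := by
      funext uv
      have : (x + j • v) uv.1 uv.2 = x uv.1 uv.2 + (j : ℤ) * vσ uv := by
        simp [hvdef, Pi.add_apply, Pi.smul_apply, smul_eq_mul]
      rw [this]
      push_cast
      ring
    rw [hfun] at hmem
    exact hmem
end

section
/- Let d, L ≥ 1, s ≥ 1, and let c : (ℤ^L)^s → (ℚ^d)^L be the polynomial map given by c(h_1,…,h_s) = Σ_{a_1,…,a_s∈ℕ^L} h_1^{a_1} ⋯ h_s^{a_s} · u(a_1,…,a_s), where the coefficients u(a_1,…,a_s) ∈ (ℚ^d)^L are all but finitely many equal to 0 and h^a := h_1^{a_1}⋯h_L^{a_L} ∈ ℤ for h ∈ ℤ^L, a ∈ ℕ^L. Then span_ℚ{G(c(h_1,…,h_s)) : h_1,…,h_s ∈ ℤ^L} = span_ℚ{G(u(a_1,…,a_s)) : a_1,…,a_s ∈ ℕ^L}, where for a family of subsets H_i of ℚ^d, span_ℚ{H_i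 : i} denotes the ℚ-linear span of their union. -/
open Finset

/-- `G(b) = span_ℚ{b_1, …, b_L} ∩ ℤ^d`, viewed as the set of rational vectors with
integer coordinates lying in the `ℚ`-span of `b_1, …, b_L`. -/

lemma int_mul_of_den_dvd {q : ℚ} {m : ℕ} (h : q.den ∣ m) : ∃ z : ℤ, (z : ℚ) = m * q := by
  obtain ⟨k, hk⟩ := h
  refine ⟨q.num * k, ?_⟩
  have hnum : (q.num : ℚ) = q.den * q := by
    exact (Rat.den_mul_eq_num q).symm
  push_cast [hk, hnum]
  ring

lemma key_scalar {ι : Type*} [Fintype ι] (S : Finset (ι → ℕ)) (cc : (ι → ℕ) → ℚ)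
    (h0 : ∀ h : ι → ℤ, ∑ a ∈ S, (∏ i, ((h i : ℚ)) ^ a i) * cc a = 0) :
    ∀ a ∈ S, cc a = 0 := by
  classical
  set n : ℕ := ∏ a ∈ S, (cc a).den with hn
  have hn0' : n ≠ 0 := by
    rw [hn]; exact Finset.prod_ne_zero_iff.2 fun a _ => (cc a).den_nz
  have hn0 : (n : ℚ) ≠ 0 := Nat.cast_ne_zero.2 hn0'
  have hz : ∀ a ∈ S, ∃ z : ℤ, (z : ℚ) = n * cc a := fun a ha =>
    int_mul_of_den_dvd (Finset.dvd_prod_of_mem _ ha)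
  choose! z hzz using hz
  let e : (ι →₀ ℕ) ≃ (ι → ℕ) := Finsupp.equivFunOnFinite
  let Q : MvPolynomial ι ℤ := ∑ a ∈ S, MvPolynomial.monomial (e.symm a) (z a)
  have hQeval : ∀ h : ι → ℤ, MvPolynomial.eval h Q = 0 := by
    intro h
    have key : ((MvPolynomial.eval h Q : ℤ) : ℚ) = 0 := by
      have : (MvPolynomial.eval h Q : ℤ) =
          ∑ a ∈ S, z a * ∏ i, (h i) ^ a i := by
        simp only [Q, map_sum, MvPolynomial.eval_monomial]
        refine Finset.sum_congr rfl fun a ha => ?_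
        rw [Finsupp.prod_pow]
        simp [e]
      rw [this]
      push_cast
      calc ∑ a ∈ S, (z a : ℚ) * ∏ i, (h i : ℚ) ^ a i
          = (n : ℚ) * ∑ a ∈ S, (∏ i, ((h i : ℚ)) ^ a i) * cc a := by
            rw [Finset.mul_sum]
            refine Finset.sum_congr rfl fun a ha => ?_
            rw [hzz a ha]; ring
        _ = 0 := by rw [h0 h, mul_zero]
    exact_mod_cast key
  have hQ : Q = 0 := MvPolynomial.funext (fun x => by rw [hQeval x, map_zero])
  intro a ha
  have hcoeff : MvPolynomial.coeff (e.symm a) Q = z a := by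
    simp only [Q, MvPolynomial.coeff_sum, MvPolynomial.coeff_monomial]
    rw [Finset.sum_eq_single a]
    · simp
    · intro b hb hba
      rw [if_neg (fun hh => hba (e.symm.injective hh))]
    · intro h; exact absurd ha h
  rw [hQ] at hcoeff
  simp only [MvPolynomial.coeff_zero] at hcoeff
  have : (n : ℚ) * cc a = 0 := by rw [← hzz a ha, ← hcoeff]; simp
  exact (mul_eq_zero.1 this).resolve_left hn0

lemma key_module {ι : Type*} [Fintype ι] {M : Type*} [AddCommGroup M] [Module ℚ M]
    (S : Finset (ι → ℕ)) (v : (ι → ℕ) → M)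
    (h0 : ∀ h : ι → ℤ, ∑ a ∈ S, (∏ i, ((h i : ℚ)) ^ a i) • v a = 0) :
    ∀ a ∈ S, v a = 0 := by
  intro a ha
  rw [← Module.forall_dual_apply_eq_zero_iff ℚ]
  intro φ
  refine key_scalar S (fun b => φ (v b)) (fun h => ?_) a ha
  have := congrArg φ (h0 h)
  simpa [map_sum, map_smul, smul_eq_mul, mul_comm] using this

lemma key_module2 {s L : ℕ} {M : Type*} [AddCommGroup M] [Module ℚ M]
    (S : Finset (Fin s → Fin L → ℕ)) (v : (Fin s → Fin L → ℕ) → M)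
    (h0 : ∀ h : Fin s → Fin L → ℤ,
      ∑ a ∈ S, (∏ t : Fin s, ∏ j : Fin L, ((h t j : ℚ)) ^ (a t j)) • v a = 0) :
    ∀ a ∈ S, v a = 0 := by
  classical
  let E : (Fin s × Fin L → ℕ) ≃ (Fin s → Fin L → ℕ) := (Equiv.curry _ _ _)
  have := key_module (ι := Fin s × Fin L) (S.map E.symm.toEmbedding) (v ∘ E) ?_
  · intro a ha
    have := this (E.symm a) (Finset.mem_map_of_mem _ ha)
    simpa [E] using this
  · intro h
    rw [Finset.sum_map]
    have := h0 (fun t j => h (t, j))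
    rw [← this]
    refine Finset.sum_congr rfl fun a ha => ?_
    simp only [Equiv.coe_toEmbedding]
    have h1 : (v ∘ E) (E.symm a) = v a := by simp
    rw [h1]
    congr 1
    rw [Fintype.prod_prod_type]
    simp [E]


def Gset {d L : ℕ} (b : Fin L → (Fin d → ℚ)) : Set (Fin d → ℚ) :=
  {x | (∃ g : Fin d → ℤ, x = fun j => (g j : ℚ)) ∧ x ∈ Submodule.span ℚ (Set.range b)}

lemma span_Gset {d L : ℕ} (b : Fin L → (Fin d → ℚ)) :
    Submodule.span ℚ (Gset b) = Submodule.span ℚ (Set.range b) := by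
  apply le_antisymm
  · exact Submodule.span_le.2 fun x hx => hx.2
  · refine Submodule.span_le.2 ?_
    rintro x ⟨i, rfl⟩
    set N : ℕ := ∏ j, (b i j).den with hN
    have hN0' : N ≠ 0 := by
      rw [hN]; exact Finset.prod_ne_zero_iff.2 fun j _ => (b i j).den_nz
    have hN0 : (N : ℚ) ≠ 0 := Nat.cast_ne_zero.2 hN0'
    have hmem : (N : ℚ) • b i ∈ Gset b := by
      constructor
      · have : ∀ j, ∃ z : ℤ, (z : ℚ) = N * b i j := fun j =>
          int_mul_of_den_dvd (Finset.dvd_prod_of_mem (fun j => (b i j).den) (Finset.mem_univ j))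
        choose g hg using this
        exact ⟨g, by funext j; simp [hg j]⟩
      · exact Submodule.smul_mem _ _ (Submodule.subset_span ⟨i, rfl⟩)
    have hbi : b i = (N : ℚ)⁻¹ • ((N : ℚ) • b i) := by
      rw [smul_smul, inv_mul_cancel₀ hN0, one_smul]
    rw [hbi]
    exact Submodule.smul_mem _ _ (Submodule.subset_span hmem)


/-- Let `c (h_1, …, h_s) = ∑_{a_1,…,a_s ∈ ℕ^L} h_1^{a_1} ⋯ h_s^{a_s} •
u (a_1,…,a_s)` be a polynomial map `(ℤ^L)^s → (ℚ^d)^L` whose coefficients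
`u (a_1,…,a_s) ∈ (ℚ^d)^L` are all but finitely many equal to `0` (supported on a finite
set `S`).  Then `span_ℚ{G(c h) : h ∈ (ℤ^L)^s} = span_ℚ{G(u a) : a ∈ (ℕ^L)^s}`. -/
theorem statement11
    (d L s : ℕ) (hd : 1 ≤ d) (hL : 1 ≤ L) (hs : 1 ≤ s)
    (u : (Fin s → (Fin L → ℕ)) → (Fin L → (Fin d → ℚ)))
    (S : Finset (Fin s → (Fin L → ℕ)))
    (hu : ∀ a ∉ S, u a = 0)
    (c : (Fin s → (Fin L → ℤ)) → (Fin L → (Fin d → ℚ)))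
    (hc : ∀ h : Fin s → (Fin L → ℤ),
      c h = ∑ a ∈ S, (∏ t : Fin s, ∏ j : Fin L, ((h t j : ℚ)) ^ (a t j)) • u a) :
    Submodule.span ℚ (⋃ h : Fin s → (Fin L → ℤ), Gset (c h)) =
      Submodule.span ℚ (⋃ a : Fin s → (Fin L → ℕ), Gset (u a)) := by
  have L1 : Submodule.span ℚ (⋃ h : Fin s → (Fin L → ℤ), Gset (c h)) =
      Submodule.span ℚ (⋃ h : Fin s → (Fin L → ℤ), Set.range (c h)) := by
    rw [Submodule.span_iUnion, Submodule.span_iUnion]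
    exact iSup_congr fun h => span_Gset _
  have R1 : Submodule.span ℚ (⋃ a : Fin s → (Fin L → ℕ), Gset (u a)) =
      Submodule.span ℚ (⋃ a : Fin s → (Fin L → ℕ), Set.range (u a)) := by
    rw [Submodule.span_iUnion, Submodule.span_iUnion]
    exact iSup_congr fun a => span_Gset _
  rw [L1, R1]
  apply le_antisymm
  · refine Submodule.span_le.2 ?_
    intro x hx
    rw [Set.mem_iUnion] at hx
    obtain ⟨h, i, rfl⟩ := hx
    rw [hc h]
    simp only [Finset.sum_apply, Pi.smul_apply]
    refine Submodule.sum_mem _ fun a ha => Submodule.smul_mem _ _ ?_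
    exact Submodule.subset_span (Set.mem_iUnion.2 ⟨a, ⟨i, rfl⟩⟩)
  · refine Submodule.span_le.2 ?_
    intro x hx
    rw [Set.mem_iUnion] at hx
    obtain ⟨a, i, rfl⟩ := hx
    by_cases haS : a ∈ S
    · set V := Submodule.span ℚ (⋃ h : Fin s → (Fin L → ℤ), Set.range (c h)) with hV
      have key := key_module2 S (fun b => V.mkQ (u b i)) ?_ a haS
      · exact (Submodule.Quotient.mk_eq_zero V).1 key
      · intro h
        have hch : c h i ∈ V := Submodule.subset_span (Set.mem_iUnion.2 ⟨h, ⟨i, rfl⟩⟩)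
        have : V.mkQ (c h i) = 0 := (Submodule.Quotient.mk_eq_zero V).2 hch
        rw [hc h] at this
        simp only [Finset.sum_apply, Pi.smul_apply, map_sum, map_smul] at this
        exact this
    · rw [hu a haS]
      simp
end
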